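/- arXiv:1105.5499 — 2 statements merged into one kernel-verified Lean document; each statement's English description precedes it below -/
import Mathlib

section
/- Let 1 ≤ p < 2. There exists a constant c > 0 such that for all N, n ∈ ℕ with 1 ≤ n ≤ N/4, the n-th Kolmogorov number of the identity map from ℓ_p^N to ℓ_∞^N satisfies d_n(id : ℓ_p^N → ℓ_∞^N) ≥ c · n^{-1/2}. -/
open scoped ENNReal BigOperators

/-- The ℓ_p quasi-norm on ℝ^N, for `p : ℝ≥0∞` (with `p = ∞` giving the sup-norm). -/
noncomputable def pNorm (p : ℝ≥0∞) {N : ℕ} (x : Fin N → ℝ) : ℝ :=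
  if p = ∞ then ⨆ i, |x i| else (∑ i, |x i| ^ p.toReal) ^ (1 / p.toReal)

/-- The n-th Kolmogorov number of the identity map `id : ℓ_p^N → ℓ_q^N`. -/
noncomputable def kolmogorovNumber (p q : ℝ≥0∞) (N n : ℕ) : ℝ :=
  sInf { r : ℝ | ∃ V : Submodule ℝ (Fin N → ℝ), Module.finrank ℝ (↥V) < n ∧
    r = sSup { s : ℝ | ∃ x : Fin N → ℝ, pNorm p x ≤ 1 ∧
      s = sInf { t : ℝ | ∃ v ∈ V, t = pNorm q (x - v) } } }

/-- The n-th Gelfand number of the identity map `id : ℓ_p^N → ℓ_q^N`. -/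
noncomputable def gelfandNumber (p q : ℝ≥0∞) (N n : ℕ) : ℝ :=
  sInf { r : ℝ | ∃ M : Submodule ℝ (Fin N → ℝ), N - Module.finrank ℝ (↥M) < n ∧
    r = sSup { s : ℝ | ∃ x ∈ M, pNorm p x ≤ 1 ∧ s = pNorm q x } }

/-- The n-th approximation number of the identity map `id : ℓ_p^N → ℓ_q^N`. -/
noncomputable def approxNumber (p q : ℝ≥0∞) (N n : ℕ) : ℝ :=
  sInf { r : ℝ | ∃ L : (Fin N → ℝ) →ₗ[ℝ] (Fin N → ℝ),
    Module.finrank ℝ (↥(LinearMap.range L)) < n ∧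
    r = sSup { s : ℝ | ∃ x : Fin N → ℝ, pNorm p x ≤ 1 ∧ s = pNorm q (x - L x) } }

/-!
Restrict to the first `m = 2n` coordinates and work in `ℓ₂^m`. For a subspace `K` of `ℓ₂^m`,
`∑ᵢ dist(eᵢ, K)² = ∑ᵢ ‖P_{Kᗮ} eᵢ‖² = tr P_{Kᗮ} = m - dim K`, so some unit vector `eᵢ` has
`dist(eᵢ, K)² ≥ (m - dim K) / m`. Taking `K` the image of a subspace `V` with `dim V < n` gives
`‖eᵢ - v‖₂² ≥ 1/2` on these coordinates for every `v ∈ V`, hence `‖eᵢ - v‖_∞ ≥ 1 / (2√n)`,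
while `‖eᵢ‖_p = 1`.
-/

open Module

section pNorm

variable {N : ℕ}

theorem pNorm_top (x : Fin N → ℝ) : pNorm ∞ x = ⨆ i, |x i| := if_pos rfl

theorem pNorm_nonneg (p : ℝ≥0∞) (x : Fin N → ℝ) : 0 ≤ pNorm p x := by
  unfold pNorm
  split_ifs
  exacts [Real.iSup_nonneg fun i ↦ abs_nonneg _, by positivity]

theorem abs_le_pNorm_top (x : Fin N → ℝ) (i : Fin N) : |x i| ≤ pNorm ∞ x :=
  pNorm_top x ▸ le_ciSup (f := fun j ↦ |x j|) (Set.finite_range _).bddAbove i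

theorem pNorm_ofReal {p : ℝ} (hp : 0 < p) (x : Fin N → ℝ) :
    pNorm (ENNReal.ofReal p) x = (∑ i, |x i| ^ p) ^ (1 / p) := by
  rw [pNorm, if_neg ENNReal.ofReal_ne_top, ENNReal.toReal_ofReal hp.le]

theorem pNorm_ofReal_single {p : ℝ} (hp : 0 < p) (i : Fin N) :
    pNorm (ENNReal.ofReal p) (Pi.single i 1) = 1 := by
  classical
  rw [pNorm_ofReal hp, Finset.sum_eq_single i (fun j _ hj ↦ by simp [hj, hp.ne'])
    (by simp)]
  simp

theorem pNorm_top_le_pNorm_ofReal {p : ℝ} (hp : 0 < p) (x : Fin N → ℝ) :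
    pNorm ∞ x ≤ pNorm (ENNReal.ofReal p) x := by
  rw [pNorm_top, pNorm_ofReal hp]
  refine Real.iSup_le (fun i ↦ ?_) (by positivity)
  calc |x i| = (|x i| ^ p) ^ (1 / p) := by
        rw [one_div, Real.rpow_rpow_inv (abs_nonneg _) hp.ne']
    _ ≤ (∑ j, |x j| ^ p) ^ (1 / p) := by
        gcongr
        exact Finset.single_le_sum (f := fun j ↦ |x j| ^ p) (fun j _ ↦ by positivity)
          (Finset.mem_univ i)

end pNorm

theorem le_kolmogorovNumber {p q : ℝ≥0∞} {N n : ℕ} {b C : ℝ} (hn : 0 < n)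
    (hC : ∀ x : Fin N → ℝ, pNorm p x ≤ 1 → pNorm q x ≤ C)
    (h : ∀ V : Submodule ℝ (Fin N → ℝ), finrank ℝ V < n →
      ∃ x, pNorm p x ≤ 1 ∧ ∀ v ∈ V, b ≤ pNorm q (x - v)) :
    b ≤ kolmogorovNumber p q N n := by
  refine le_csInf ⟨_, ⊥, by rwa [finrank_bot], rfl⟩ ?_
  rintro _ ⟨V, hV, rfl⟩
  obtain ⟨x, hx, hxV⟩ := h V hV
  have hdist_le : ∀ y : Fin N → ℝ, sInf {t | ∃ v ∈ V, t = pNorm q (y - v)} ≤ pNorm q y :=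
    fun y ↦ csInf_le ⟨0, by rintro _ ⟨v, -, rfl⟩; exact pNorm_nonneg _ _⟩
      ⟨0, V.zero_mem, by rw [sub_zero]⟩
  have hbdd :
      BddAbove {s | ∃ y, pNorm p y ≤ 1 ∧ s = sInf {t | ∃ v ∈ V, t = pNorm q (y - v)}} := by
    refine ⟨C, ?_⟩
    rintro _ ⟨y, hy, rfl⟩
    exact (hdist_le y).trans (hC y hy)
  refine (le_csSup hbdd ⟨x, hx, rfl⟩).trans' <|
    le_csInf ⟨_, 0, V.zero_mem, rfl⟩ fun _ ⟨v, hv, hvt⟩ ↦ hvt ▸ hxV v hv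

section OrthonormalBasis

variable {ι E : Type*} [Fintype ι] [NormedAddCommGroup E] [InnerProductSpace ℝ E]
  [FiniteDimensional ℝ E]

theorem Submodule.trace_starProjection (K : Submodule ℝ E) :
    LinearMap.trace ℝ E K.starProjection = finrank ℝ K :=
  LinearMap.IsProj.trace ⟨K.starProjection_apply_mem, fun _ ↦ K.starProjection_eq_self_iff.mpr⟩

theorem OrthonormalBasis.sum_norm_sq_starProjection (b : OrthonormalBasis ι ℝ E)
    (K : Submodule ℝ E) : ∑ i, ‖K.starProjection (b i)‖ ^ 2 = finrank ℝ K := by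
  rw [← K.trace_starProjection, LinearMap.trace_eq_sum_inner _ b]
  refine Finset.sum_congr rfl fun i _ ↦ ?_
  rw [← real_inner_self_eq_norm_sq, K.inner_starProjection_left_eq_right,
    K.starProjection_eq_self_iff.mpr (K.starProjection_apply_mem _)]
  rfl

theorem Submodule.norm_starProjection_orthogonal_le (K : Submodule ℝ E) (x : E) {w : E}
    (hw : w ∈ K) : ‖Kᗮ.starProjection x‖ ≤ ‖x - w‖ := by
  have hw' : Kᗮ.starProjection w = 0 := by
    rw [starProjection_orthogonal_val, K.starProjection_eq_self_iff.mpr hw, sub_self]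
  simpa only [map_sub, hw', sub_zero] using Kᗮ.norm_starProjection_apply_le (x - w)

theorem OrthonormalBasis.exists_forall_le_norm_sub_sq [Nonempty ι] (b : OrthonormalBasis ι ℝ E)
    (K : Submodule ℝ E) :
    ∃ i, ∀ w ∈ K, (finrank ℝ Kᗮ : ℝ) / Fintype.card ι ≤ ‖b i - w‖ ^ 2 := by
  have hsum : ∑ _i : ι, (finrank ℝ Kᗮ : ℝ) / Fintype.card ι
      ≤ ∑ i, ‖Kᗮ.starProjection (b i)‖ ^ 2 := by
    rw [b.sum_norm_sq_starProjection, Finset.sum_const, Finset.card_univ, nsmul_eq_mul,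
      mul_div_cancel₀ _ (by exact_mod_cast Fintype.card_ne_zero)]
  obtain ⟨i, -, hi⟩ := Finset.exists_le_of_sum_le Finset.univ_nonempty hsum
  exact ⟨i, fun w hw ↦ hi.trans <| by
    gcongr; exact K.norm_starProjection_orthogonal_le _ hw⟩

end OrthonormalBasis

section restrictToEuclidean

variable {N m : ℕ}

noncomputable def restrictToEuclidean (h : m ≤ N) :
    (Fin N → ℝ) →ₗ[ℝ] EuclideanSpace ℝ (Fin m) :=
  (WithLp.linearEquiv 2 ℝ (Fin m → ℝ)).symm.toLinearMap ∘ₗ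
    LinearMap.funLeft ℝ ℝ (Fin.castLE h)

@[simp]
theorem restrictToEuclidean_apply (h : m ≤ N) (x : Fin N → ℝ) (j : Fin m) :
    restrictToEuclidean h x j = x (Fin.castLE h j) := rfl

theorem restrictToEuclidean_single (h : m ≤ N) (i : Fin m) :
    restrictToEuclidean h (Pi.single (Fin.castLE h i) 1) = EuclideanSpace.single i 1 := by
  ext j
  simp [Pi.single_apply, Fin.castLE_inj]

theorem norm_restrictToEuclidean_sq_le (h : m ≤ N) (x : Fin N → ℝ) :
    ‖restrictToEuclidean h x‖ ^ 2 ≤ m * pNorm ∞ x ^ 2 := by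
  rw [EuclideanSpace.norm_sq_eq]
  calc ∑ j, ‖restrictToEuclidean h x j‖ ^ 2 ≤ ∑ _j : Fin m, pNorm ∞ x ^ 2 := by
        gcongr with j
        rw [restrictToEuclidean_apply, Real.norm_eq_abs]
        exact abs_le_pNorm_top x _
    _ = m * pNorm ∞ x ^ 2 := by simp

end restrictToEuclidean

theorem exists_single_sub_pNorm_top_sq_ge {N m : ℕ} (hm : 0 < m) (hmN : m ≤ N)
    (V : Submodule ℝ (Fin N → ℝ)) :
    ∃ i : Fin N, ∀ v ∈ V, (m : ℝ) - finrank ℝ V ≤ m ^ 2 * pNorm ∞ (Pi.single i 1 - v) ^ 2 := by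
  have : Nonempty (Fin m) := ⟨⟨0, hm⟩⟩
  set R := restrictToEuclidean hmN
  set K := V.map R
  have hK : (m : ℝ) - finrank ℝ V ≤ finrank ℝ Kᗮ := by
    have hsum : finrank ℝ K + finrank ℝ Kᗮ = m :=
      K.finrank_add_finrank_orthogonal.trans finrank_euclideanSpace_fin
    have hKV : finrank ℝ K ≤ finrank ℝ V := Submodule.finrank_map_le R V
    rw [sub_le_iff_le_add]
    exact_mod_cast (by omega : m ≤ finrank ℝ Kᗮ + finrank ℝ V)
  obtain ⟨j, hj⟩ := (EuclideanSpace.basisFun (Fin m) ℝ).exists_forall_le_norm_sub_sq K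
  refine ⟨Fin.castLE hmN j, fun v hv ↦ ?_⟩
  have hdist := hj (R v) (Submodule.mem_map_of_mem hv)
  rw [EuclideanSpace.basisFun_apply, Fintype.card_fin, ← restrictToEuclidean_single hmN,
    ← map_sub] at hdist
  have hmpos : (0 : ℝ) < m := by exact_mod_cast hm
  rw [div_le_iff₀' hmpos] at hdist
  nlinarith [norm_restrictToEuclidean_sq_le hmN (Pi.single (Fin.castLE hmN j) 1 - v)]

theorem kolmogorov_lp_linfty_lower_general (p : ℝ) (hp1 : 1 ≤ p) :
    ∃ c : ℝ, 0 < c ∧ ∀ N n : ℕ, 1 ≤ n → (n : ℝ) ≤ (N : ℝ) / 4 →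
      c * (n : ℝ) ^ (-(1/2) : ℝ) ≤ kolmogorovNumber (ENNReal.ofReal p) ∞ N n := by
  have hp : 0 < p := by linarith
  refine ⟨1 / 2, one_half_pos, fun N n hn hnN ↦ ?_⟩
  have h2n : 2 * n ≤ N := by
    have : (2 * n : ℝ) ≤ N := by linarith [(Nat.one_le_cast (α := ℝ)).mpr hn]
    exact_mod_cast this
  have hn' : (0 : ℝ) < n := by exact_mod_cast hn
  have hc_sq : (1 / 2 * (n : ℝ) ^ (-(1 / 2) : ℝ)) ^ 2 = 1 / (4 * n) := by
    rw [mul_pow, ← Real.rpow_natCast ((n : ℝ) ^ _) 2, ← Real.rpow_mul hn'.le]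
    norm_num [Real.rpow_neg_one]
    ring
  refine le_kolmogorovNumber hn (fun x hx ↦ (pNorm_top_le_pNorm_ofReal hp x).trans hx)
    fun V hV ↦ ?_
  obtain ⟨i, hi⟩ := exists_single_sub_pNorm_top_sq_ge (by omega) h2n V
  refine ⟨_, (pNorm_ofReal_single hp i).le, fun v hv ↦ ?_⟩
  have hV' : (finrank ℝ V : ℝ) + 1 ≤ n := by exact_mod_cast hV
  refine le_of_pow_le_pow_left₀ two_ne_zero (pNorm_nonneg _ _) ?_
  rw [hc_sq, div_le_iff₀ (by positivity)]
  push_cast at hi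
  nlinarith [hi v hv]

/-- For `1 ≤ p < 2` there is `c > 0` such that for all `1 ≤ n ≤ N/4`,
`d_n(id : ℓ_p^N → ℓ_∞^N) ≥ c · n^{-1/2}`. -/
theorem kolmogorov_lp_linfty_lower (p : ℝ) (hp1 : 1 ≤ p) (hp2 : p < 2) :
    ∃ c : ℝ, 0 < c ∧ ∀ N n : ℕ, 1 ≤ n → (n : ℝ) ≤ (N : ℝ) / 4 →
      c * (n : ℝ) ^ (-(1/2) : ℝ) ≤ kolmogorovNumber (ENNReal.ofReal p) ∞ N n :=
  kolmogorov_lp_linfty_lower_general p hp1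
end

section
/- Let 0 < p ≤ 1 and 0 < λ < 1. Then there exists a constant C_λ > 0 depending only on λ such that for all N, n ∈ ℕ, the n-th approximation number of the identity map from ℓ_p^N to ℓ_∞^N satisfies: a_n(id : ℓ_p^N → ℓ_∞^N) ≤ 1 if n ≤ N^λ; a_n(id : ℓ_p^N → ℓ_∞^N) ≤ C_λ · n^{-1/2} if N^λ < n ≤ N; and a_n(id : ℓ_p^N → ℓ_∞^N) = 0 if n > N. -/
open scoped ENNReal BigOperators

/-!
For `p ≤ 1` the unit ball of `ℓ_p^N` lies in that of `ℓ_1^N`, so it suffices to find a matrix `B`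
of rank `< n` with unit diagonal and off-diagonal entries `O(n^{-1/2})`, since then
`‖x - B x‖_∞ ≤ max_{i ≠ j} |B i j| · ‖x‖_1`. Such a matrix is the normalized Gram matrix of the
graphs of `N` distinct polynomials of degree `< k` over `𝔽_q`, viewed as indicator vectors in
`ℝ^{q²}` (a Reed–Solomon code): two graphs meet in at most `k` points. Taking `q ≈ √n` and
`k ≈ 4/λ` gives `q ^ k ≥ N` as soon as `N^λ < n`. Trivially `a_n ≤ 1` (take `L = 0`) and
`a_n = 0` for `n > N` (take `L = id`).
-/

open Finset Polynomial Matrix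

theorem lt_pow_ceil_inv_of_rpow_lt {x y l : ℝ} (hx : 0 ≤ x) (hy : 1 ≤ y) (hl : 0 < l)
    (h : x ^ l < y) : x < y ^ ⌈l⁻¹⌉₊ :=
  calc x = (x ^ l) ^ l⁻¹ := (Real.rpow_rpow_inv hx hl.ne').symm
    _ < y ^ l⁻¹ := Real.rpow_lt_rpow (by positivity) h (inv_pos.mpr hl)
    _ ≤ y ^ (⌈l⁻¹⌉₊ : ℝ) := Real.rpow_le_rpow_of_exponent_le hy (Nat.le_ceil _)
    _ = y ^ ⌈l⁻¹⌉₊ := Real.rpow_natCast y _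

section PNorm

variable {N : ℕ}

theorem pNorm_top_nonneg (y : Fin N → ℝ) : 0 ≤ pNorm ∞ y := by
  rw [pNorm, if_pos rfl]
  exact Real.iSup_nonneg fun i => abs_nonneg (y i)

theorem pNorm_top_le {y : Fin N → ℝ} {a : ℝ} (h : ∀ i, |y i| ≤ a) (ha : 0 ≤ a) :
    pNorm ∞ y ≤ a := by
  rw [pNorm, if_pos rfl]
  exact Real.iSup_le h ha

theorem sum_abs_le_one_of_pNorm_le_one {p : ℝ} (hp0 : 0 < p) (hp1 : p ≤ 1) {x : Fin N → ℝ}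
    (hx : pNorm (ENNReal.ofReal p) x ≤ 1) : ∑ i, |x i| ≤ 1 := by
  rw [pNorm, if_neg ENNReal.ofReal_ne_top, ENNReal.toReal_ofReal hp0.le] at hx
  have hsum_nonneg : 0 ≤ ∑ i, |x i| ^ p := by positivity
  have hsum : ∑ i, |x i| ^ p ≤ 1 := by
    rw [← Real.rpow_inv_rpow hsum_nonneg hp0.ne', ← one_div]
    exact Real.rpow_le_one (by positivity) hx hp0.le
  have hcoord (i : Fin N) : |x i| ≤ 1 := by
    by_contra! h
    have : 1 < |x i| ^ p := Real.one_lt_rpow h hp0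
    linarith [single_le_sum (fun j _ => by positivity : ∀ j ∈ univ, 0 ≤ |x j| ^ p) (mem_univ i)]
  calc ∑ i, |x i| ≤ ∑ i, |x i| ^ p :=
        sum_le_sum fun i _ => Real.self_le_rpow_of_le_one (abs_nonneg _) (hcoord i) hp1
    _ ≤ 1 := hsum

end PNorm

section ApproxNumber

variable {P : ℝ≥0∞} {N n : ℕ}

theorem approxNumber_nonneg : 0 ≤ approxNumber P ∞ N n :=
  Real.sInf_nonneg fun _ ⟨_, _, hr⟩ =>
    hr ▸ Real.sSup_nonneg fun _ ⟨_, _, hs⟩ => hs ▸ pNorm_top_nonneg _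

theorem approxNumber_le_of_forall_pNorm_le (L : (Fin N → ℝ) →ₗ[ℝ] (Fin N → ℝ))
    (hL : Module.finrank ℝ (LinearMap.range L) < n) {b : ℝ} (hb : 0 ≤ b)
    (h : ∀ x, pNorm P x ≤ 1 → pNorm ∞ (x - L x) ≤ b) : approxNumber P ∞ N n ≤ b := by
  unfold approxNumber
  refine csInf_le_of_le ?_ ⟨L, hL, rfl⟩ (Real.sSup_le ?_ hb)
  · exact ⟨0, fun _ ⟨_, _, hr⟩ =>
      hr ▸ Real.sSup_nonneg fun _ ⟨_, _, hs⟩ => hs ▸ pNorm_top_nonneg _⟩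
  · rintro s ⟨x, hx, rfl⟩
    exact h x hx

theorem approxNumber_zero_right : approxNumber P ∞ N 0 = 0 := by
  simp [approxNumber]

theorem approxNumber_eq_zero_of_lt (hn : N < n) : approxNumber P ∞ N n = 0 := by
  refine le_antisymm (approxNumber_le_of_forall_pNorm_le LinearMap.id ?_ le_rfl fun x _ => ?_)
    approxNumber_nonneg
  · rwa [LinearMap.range_id, finrank_top, Module.finrank_fin_fun]
  · rw [LinearMap.id_apply, sub_self]
    exact pNorm_top_le (fun i => by simp) le_rfl

end ApproxNumber

theorem abs_mulVec_le_mul_sum_abs {ι : Type*} [Fintype ι] {D : Matrix ι ι ℝ} {μ : ℝ}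
    (hD : ∀ i j, |D i j| ≤ μ) (x : ι → ℝ) (i : ι) : |(D *ᵥ x) i| ≤ μ * ∑ j, |x j| := by
  calc |(D *ᵥ x) i| = |∑ j, D i j * x j| := rfl
    _ ≤ ∑ j, |D i j * x j| := abs_sum_le_sum_abs _ _
    _ ≤ ∑ j, μ * |x j| := by
      gcongr with j
      rw [abs_mul]
      exact mul_le_mul_of_nonneg_right (hD i j) (abs_nonneg _)
    _ = μ * ∑ j, |x j| := (mul_sum _ _ _).symm

section ApproxNumberLp

variable {p : ℝ} {N n : ℕ}

theorem approxNumber_le_one (hp0 : 0 < p) (hp1 : p ≤ 1) :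
    approxNumber (ENNReal.ofReal p) ∞ N n ≤ 1 := by
  rcases Nat.eq_zero_or_pos n with rfl | hn
  · rw [approxNumber_zero_right]
    exact zero_le_one
  have hrank : Module.finrank ℝ (LinearMap.range (0 : (Fin N → ℝ) →ₗ[ℝ] (Fin N → ℝ))) < n := by
    rwa [LinearMap.range_zero, finrank_bot]
  refine approxNumber_le_of_forall_pNorm_le 0 hrank zero_le_one fun x hx => ?_
  refine pNorm_top_le (fun i => ?_) zero_le_one
  rw [LinearMap.zero_apply, sub_zero]
  exact (single_le_sum (fun j _ => abs_nonneg (x j)) (mem_univ i)).trans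
    (sum_abs_le_one_of_pNorm_le_one hp0 hp1 hx)

theorem approxNumber_le_of_diag_eq_one (hp0 : 0 < p) (hp1 : p ≤ 1) {B : Matrix (Fin N) (Fin N) ℝ}
    (hB : B.rank < n) (hdiag : ∀ i, B i i = 1) {μ : ℝ} (hμ : 0 ≤ μ)
    (hoff : ∀ i j, i ≠ j → |B i j| ≤ μ) : approxNumber (ENNReal.ofReal p) ∞ N n ≤ μ := by
  have hD : ∀ i j, |(1 - B) i j| ≤ μ := by
    intro i j
    rcases eq_or_ne i j with rfl | hij
    · simpa [hdiag] using hμ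
    · simpa [Matrix.one_apply_ne hij] using hoff i j hij
  refine approxNumber_le_of_forall_pNorm_le B.mulVecLin hB hμ fun x hx => ?_
  have hsub : x - B.mulVecLin x = (1 - B) *ᵥ x := by
    rw [Matrix.sub_mulVec, Matrix.one_mulVec, Matrix.mulVecLin_apply]
  refine pNorm_top_le (fun i => ?_) hμ
  rw [hsub]
  calc |((1 - B) *ᵥ x) i| ≤ μ * ∑ j, |x j| := abs_mulVec_le_mul_sum_abs hD x i
    _ ≤ μ * 1 := by gcongr; exact sum_abs_le_one_of_pNorm_le_one hp0 hp1 hx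
    _ = μ := mul_one μ

end ApproxNumberLp

section GraphIncidence

variable {F : Type*} [Field F] [Fintype F] [DecidableEq F]

theorem card_eval_eq_le_of_mem_degreeLT {k : ℕ} {f g : F[X]} (hf : f ∈ degreeLT F k)
    (hg : g ∈ degreeLT F k) (hfg : f ≠ g) : #{x | f.eval x = g.eval x} ≤ k := by
  have hne : f - g ≠ 0 := sub_ne_zero.mpr hfg
  have hdeg : (f - g).degree < k := mem_degreeLT.mp (sub_mem hf hg)
  calc #{x | f.eval x = g.eval x} ≤ (f - g).natDegree := by
        refine card_le_degree_of_subset_roots fun x hx => ?_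
        rw [mem_roots hne, IsRoot, eval_sub, sub_eq_zero]
        exact (mem_filter.mp hx).2
    _ ≤ k := ((natDegree_lt_iff_degree_lt hne).mpr hdeg).le

def graphIncidence {ι : Type*} (f : ι → F[X]) : Matrix (F × F) ι ℝ :=
  Matrix.of fun z i => if (f i).eval z.1 = z.2 then 1 else 0

theorem graphIncidence_transpose_mul_apply {ι : Type*} (f : ι → F[X]) (i j : ι) :
    ((graphIncidence f)ᵀ * graphIncidence f) i j = #{x | (f i).eval x = (f j).eval x} := by
  simp [graphIncidence, Matrix.mul_apply, Fintype.sum_prod_type]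

end GraphIncidence

theorem exists_rank_le_sq_diag_eq_one (F : Type*) [Field F] [Fintype F] [DecidableEq F]
    {k N : ℕ} (hN : N ≤ Fintype.card F ^ k) :
    ∃ B : Matrix (Fin N) (Fin N) ℝ, B.rank ≤ Fintype.card F ^ 2 ∧ (∀ i, B i i = 1) ∧
      ∀ i j, i ≠ j → |B i j| ≤ k / Fintype.card F := by
  obtain ⟨emb⟩ : Nonempty (Fin N ↪ (Fin k → F)) :=
    Function.Embedding.nonempty_of_card_le (by simpa using hN)
  set f : Fin N → F[X] := fun i => (degreeLTEquiv F k).symm (emb i)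
  have hf_mem (i : Fin N) : f i ∈ degreeLT F k := ((degreeLTEquiv F k).symm (emb i)).2
  have hf_inj : Function.Injective f := fun i j h =>
    emb.injective ((degreeLTEquiv F k).symm.injective (Subtype.ext h))
  set G := graphIncidence f
  have hq : (0 : ℝ) < Fintype.card F := by exact_mod_cast Fintype.card_pos
  refine ⟨Gᵀ * ((Fintype.card F : ℝ)⁻¹ • G), ?_, fun i => ?_, fun i j hij => ?_⟩
  · calc _ ≤ Gᵀ.rank := rank_mul_le_left _ _
      _ ≤ Fintype.card (F × F) := rank_le_card_width _
      _ = _ := by rw [Fintype.card_prod, sq]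
  · rw [Matrix.mul_smul, Matrix.smul_apply, graphIncidence_transpose_mul_apply, smul_eq_mul]
    simp [hq.ne']
  · rw [Matrix.mul_smul, Matrix.smul_apply, graphIncidence_transpose_mul_apply, smul_eq_mul,
      abs_of_nonneg (by positivity), inv_mul_eq_div]
    gcongr
    exact_mod_cast card_eval_eq_le_of_mem_degreeLT (hf_mem i) (hf_mem j) (hf_inj.ne hij)

section Construction

variable {p : ℝ} {N n : ℕ}

theorem approxNumber_le_div_two_pow (hp0 : 0 < p) (hp1 : p ≤ 1) {m k : ℕ} (hm : m ≠ 0)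
    (hN : N ≤ 2 ^ (m * k)) (hn : 4 ^ m < n) :
    approxNumber (ENNReal.ofReal p) ∞ N n ≤ k / 2 ^ m := by
  classical
  let := Fintype.ofFinite (GaloisField 2 m)
  have hcard : Fintype.card (GaloisField 2 m) = 2 ^ m := by
    rw [← Nat.card_eq_fintype_card, GaloisField.card 2 m hm]
  obtain ⟨B, hrank, hdiag, hoff⟩ :=
    exists_rank_le_sq_diag_eq_one (GaloisField 2 m) (k := k) (N := N) (by rwa [hcard, ← pow_mul])
  rw [hcard, ← pow_mul, mul_comm, pow_mul] at hrank
  push_cast [hcard] at hoff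
  exact approxNumber_le_of_diag_eq_one hp0 hp1 (hrank.trans_lt (by norm_num [hn])) hdiag
    (by positivity) hoff

/-- With `q = 2 ^ m` the largest power of two with `q ^ 2 < n`, the Reed–Solomon matrix of
polynomials of degree `< 4 e` has rank `< n`, at least `q ^ (4 e) ≥ n ^ e` columns, and coherence
`4 e / q ≤ 8 e / √n`. -/
theorem approxNumber_le_mul_rpow_neg_half (hp0 : 0 < p) (hp1 : p ≤ 1) {e : ℕ} (he : e ≠ 0)
    (hN : N < n ^ e) :
    approxNumber (ENNReal.ofReal p) ∞ N n ≤ 8 * e * (n : ℝ) ^ (-(1 / 2) : ℝ) := by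
  have hn : 0 < n := Nat.pos_of_ne_zero (by rintro rfl; simp [he] at hN)
  have hsqrt : 0 < √(n : ℝ) := Real.sqrt_pos.mpr (by exact_mod_cast hn)
  rw [Real.rpow_neg (Nat.cast_nonneg n), ← Real.sqrt_eq_rpow, ← div_eq_mul_inv]
  rcases le_or_gt n 4 with hn4 | hn4
  · refine (approxNumber_le_one hp0 hp1).trans ?_
    rw [one_le_div hsqrt, Real.sqrt_le_iff]
    refine ⟨by positivity, ?_⟩
    have : (1 : ℝ) ≤ e := by exact_mod_cast Nat.one_le_iff_ne_zero.mpr he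
    have : (n : ℝ) ≤ 4 := by exact_mod_cast hn4
    nlinarith
  set m := Nat.log 4 (n - 1)
  have hm : m ≠ 0 := (Nat.log_pos (by norm_num) (by omega)).ne'
  have hlow : 4 ^ m < n := by
    have : 4 ^ m ≤ n - 1 := Nat.pow_log_le_self 4 (by omega)
    omega
  have hupp : n ≤ 4 ^ (m + 1) := by
    have : n - 1 < 4 ^ (m + 1) := Nat.lt_pow_succ_log_self (by norm_num) (n - 1)
    omega
  have hN' : N ≤ 2 ^ (m * (4 * e)) :=
    calc N ≤ n ^ e := hN.le
      _ ≤ (4 ^ (m + 1)) ^ e := Nat.pow_le_pow_left hupp e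
      _ = 2 ^ (2 * (m + 1) * e) := by
        rw [← pow_mul, show 4 = 2 ^ 2 from rfl, ← pow_mul, mul_assoc]
      _ ≤ 2 ^ (m * (4 * e)) :=
        Nat.pow_le_pow_right (by norm_num) (by nlinarith [Nat.one_le_iff_ne_zero.mpr hm])
  have hsqrt_le : √(n : ℝ) ≤ 2 ^ (m + 1) := by
    rw [Real.sqrt_le_left (by positivity), ← pow_mul, mul_comm, pow_mul]
    exact_mod_cast hupp.trans_eq (by norm_num)
  calc approxNumber (ENNReal.ofReal p) ∞ N n ≤ ((4 * e : ℕ) : ℝ) / 2 ^ m :=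
        approxNumber_le_div_two_pow hp0 hp1 hm hN' hlow
    _ = 8 * e / 2 ^ (m + 1) := by push_cast; ring
    _ ≤ 8 * e / √(n : ℝ) := div_le_div_of_nonneg_left (by positivity) hsqrt hsqrt_le

end Construction

theorem approx_lp_linfty_upper_general (p lam : ℝ) (h1 : 0 < p) (h2 : p ≤ 1)
    (hl1 : 0 < lam) :
    ∃ C : ℝ, 0 < C ∧ ∀ N n : ℕ,
      ((n : ℝ) ≤ (N : ℝ) ^ lam → approxNumber (ENNReal.ofReal p) ∞ N n ≤ 1) ∧
      ((N : ℝ) ^ lam < (n : ℝ) → n ≤ N →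
        approxNumber (ENNReal.ofReal p) ∞ N n ≤ C * (n : ℝ) ^ (-(1/2) : ℝ)) ∧
      (n > N → approxNumber (ENNReal.ofReal p) ∞ N n = 0) := by
  have he : ⌈lam⁻¹⌉₊ ≠ 0 := (Nat.ceil_pos.mpr (inv_pos.mpr hl1)).ne'
  refine ⟨8 * ⌈lam⁻¹⌉₊, by positivity, fun N n => ⟨fun _ => approxNumber_le_one h1 h2,
    fun hlow _ => approxNumber_le_mul_rpow_neg_half h1 h2 he ?_, approxNumber_eq_zero_of_lt⟩⟩
  have hn : 0 < n := by exact_mod_cast (Real.rpow_nonneg (Nat.cast_nonneg N) lam).trans_lt hlow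
  exact_mod_cast lt_pow_ceil_inv_of_rpow_lt (Nat.cast_nonneg N) (Nat.one_le_cast.mpr hn) hl1 hlow

/-- For `0 < p ≤ 1` and `0 < λ < 1` there is `C_λ > 0` with
`a_n(id : ℓ_p^N → ℓ_∞^N) ≤ 1` if `n ≤ N^λ`, `≤ C_λ·n^{-1/2}` if `N^λ < n ≤ N`,
and `= 0` if `n > N`. -/
theorem approx_lp_linfty_upper (p lam : ℝ) (h1 : 0 < p) (h2 : p ≤ 1)
    (hl1 : 0 < lam) (hl2 : lam < 1) :
    ∃ C : ℝ, 0 < C ∧ ∀ N n : ℕ,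
      ((n : ℝ) ≤ (N : ℝ) ^ lam → approxNumber (ENNReal.ofReal p) ∞ N n ≤ 1) ∧
      ((N : ℝ) ^ lam < (n : ℝ) → n ≤ N →
        approxNumber (ENNReal.ofReal p) ∞ N n ≤ C * (n : ℝ) ^ (-(1/2) : ℝ)) ∧
      (n > N → approxNumber (ENNReal.ofReal p) ∞ N n = 0) :=
  approx_lp_linfty_upper_general p lam h1 h2 hl1
end
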